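/- For |v| ≤ 1, ∑_{m=1}^∞ v^m B(m/2, 1/2)/(2π^2 m) = (1/(2π)) arcsin(v) + (1/(2π^2)) arcsin(v)^2, where the series converges absolutely. -/

import Mathlib

open Real Complex

/-- The Euler Beta function, as a real integral. -/
noncomputable def Beta (a b : ℝ) : ℝ :=
  ∫ t in (0 : ℝ)..1, t ^ (a - 1) * (1 - t) ^ (b - 1)

/-- The principal branch of the complex arcsine. -/
noncomputable def carcsin (z : ℂ) : ℂ :=
  -Complex.I * Complex.log (Complex.I * z + (1 - z ^ 2) ^ ((1 : ℂ) / 2))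

/-!
The coefficients `c n = B((n+1)/2, 1/2) = ∫₀^π sinⁿ` satisfy `c 0 = π`, `c 1 = 2` and
`(n + 2) c (n + 2) = (n + 1) c n`. This recursion says that `P z = ∑ c n zⁿ` solves
`(1 - z²) P' - z P = 2` on the unit disc, as does `(π + 2 arcsin z) / √(1 - z²)`; integrating,
`∑ c n z^(n+1) / (n+1) = π arcsin z + arcsin² z` there. Since `c n c (n+1) = 2π / (n+1)` and `c` is
decreasing, `c n = O(n^(-1/2))`, so this series converges absolutely and uniformly on the closed
disc, and the identity extends to the boundary by continuity.
-/

theorem Beta_eq_Gamma_mul_Gamma_div {a b : ℝ} (ha : 0 < a) (hb : 0 < b) :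
    Beta a b = Real.Gamma a * Real.Gamma b / Real.Gamma (a + b) := by
  have hcast : (Beta a b : ℂ) = betaIntegral a b := by
    rw [Beta, betaIntegral, ← intervalIntegral.integral_ofReal]
    refine intervalIntegral.integral_congr fun t ht => ?_
    rw [Set.uIcc_of_le zero_le_one] at ht
    push_cast
    rw [ofReal_cpow ht.1, ofReal_cpow (sub_nonneg.2 ht.2)]
    push_cast
    ring
  rw [← ProbabilityTheory.beta, ProbabilityTheory.beta_eq_betaIntegralReal a b ha hb, ← hcast,
    ofReal_re]

theorem Beta_add_one_left {a b : ℝ} (ha : 0 < a) (hb : 0 < b) :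
    Beta (a + 1) b = a / (a + b) * Beta a b := by
  rw [Beta_eq_Gamma_mul_Gamma_div (by linarith) hb, Beta_eq_Gamma_mul_Gamma_div ha hb,
    add_right_comm, Real.Gamma_add_one ha.ne', Real.Gamma_add_one (by positivity)]
  have := (Real.Gamma_pos_of_pos (add_pos ha hb)).ne'
  field_simp

theorem Beta_one_half_one_half : Beta (1 / 2) (1 / 2) = π := by
  rw [Beta_eq_Gamma_mul_Gamma_div (by norm_num) (by norm_num)]
  norm_num [Real.Gamma_one_half_eq, Real.mul_self_sqrt pi_pos.le]

theorem Beta_one_one_half : Beta 1 (1 / 2) = 2 := by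
  rw [Beta_eq_Gamma_mul_Gamma_div one_pos (by norm_num),
    show (1 : ℝ) + 1 / 2 = 1 / 2 + 1 by norm_num, Real.Gamma_add_one (by norm_num),
    Real.Gamma_one_half_eq]
  have := Real.sqrt_pos.2 pi_pos
  field_simp
  norm_num

noncomputable def sinPowIntegral (n : ℕ) : ℝ := ∫ x in (0 : ℝ)..π, Real.sin x ^ n

theorem sinPowIntegral_zero : sinPowIntegral 0 = π := by simp [sinPowIntegral]

theorem sinPowIntegral_one : sinPowIntegral 1 = 2 := by
  norm_num [sinPowIntegral, integral_sin]

theorem sinPowIntegral_add_two (n : ℕ) :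
    sinPowIntegral (n + 2) = (n + 1) / (n + 2) * sinPowIntegral n := by
  simp [sinPowIntegral, integral_sin_pow]

theorem sinPowIntegral_pos (n : ℕ) : 0 < sinPowIntegral n := integral_sin_pow_pos n

theorem sinPowIntegral_le_pi (n : ℕ) : sinPowIntegral n ≤ π :=
  sinPowIntegral_zero ▸ integral_sin_pow_antitone (Nat.zero_le n)

theorem sinPowIntegral_mul_succ (n : ℕ) :
    sinPowIntegral n * sinPowIntegral (n + 1) = 2 * π / (n + 1) := by
  induction n with
  | zero => simp [sinPowIntegral_zero, sinPowIntegral_one, mul_comm]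
  | succ n ih =>
    rw [sinPowIntegral_add_two, mul_left_comm, mul_comm _ (sinPowIntegral n), ih]
    field_simp
    push_cast
    ring

theorem sinPowIntegral_sq_le (n : ℕ) : sinPowIntegral n ^ 2 ≤ 4 * π / (n + 1) := by
  cases n with
  | zero => nlinarith [sinPowIntegral_zero, pi_le_four, pi_pos]
  | succ n =>
    calc sinPowIntegral (n + 1) ^ 2 ≤ sinPowIntegral n * sinPowIntegral (n + 1) := by
          rw [sq]
          exact mul_le_mul_of_nonneg_right (integral_sin_pow_succ_le n)
            (sinPowIntegral_pos _).le
      _ = 2 * π / (n + 1) := sinPowIntegral_mul_succ n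
      _ ≤ 4 * π / ((n + 1 : ℕ) + 1) := by
          rw [div_le_div_iff₀ (by positivity) (by positivity)]
          push_cast
          nlinarith [pi_pos]

theorem Beta_eq_sinPowIntegral (n : ℕ) : Beta ((n + 1) / 2) (1 / 2) = sinPowIntegral n := by
  induction n using Nat.twoStepInduction with
  | zero => simpa [sinPowIntegral_zero] using Beta_one_half_one_half
  | one => norm_num [sinPowIntegral_one, Beta_one_one_half]
  | more n ih _ =>
    rw [sinPowIntegral_add_two, ← ih, show ((n + 2 : ℕ) + 1 : ℝ) / 2 = (n + 1) / 2 + 1 by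
      push_cast; ring, Beta_add_one_left (by positivity) (by norm_num)]
    congr 1
    field_simp
    ring

theorem summable_sinPowIntegral_div : Summable fun n : ℕ => sinPowIntegral n / (n + 1) := by
  have hp : Summable fun n : ℕ => 1 / |(n : ℝ) + 1| ^ (3 / 2 : ℝ) :=
    (Real.summable_one_div_nat_add_rpow 1 _).2 (by norm_num)
  refine Summable.of_nonneg_of_le (fun n => (div_pos (sinPowIntegral_pos n) (by positivity)).le)
    (fun n => ?_) (hp.mul_left (2 * √π))
  have hn : (0 : ℝ) < n + 1 := by positivity
  have hsqrt : √(4 * π / (n + 1)) = 2 * √π / √(n + 1) := by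
    rw [Real.sqrt_div' _ hn.le, Real.sqrt_mul' _ pi_pos.le,
      show (4 : ℝ) = 2 ^ 2 by norm_num, Real.sqrt_sq zero_le_two]
  rw [abs_of_pos hn, show (3 / 2 : ℝ) = 1 + 1 / 2 by norm_num, Real.rpow_add hn, Real.rpow_one,
    ← Real.sqrt_eq_rpow]
  calc sinPowIntegral n / (n + 1) ≤ √(4 * π / (n + 1)) / (n + 1) := by
        gcongr
        exact Real.le_sqrt_of_sq_le (sinPowIntegral_sq_le n)
    _ = _ := by
        rw [hsqrt]
        field_simp

section PowerSeries

variable {𝕜 : Type*} [RCLike 𝕜] {a : ℕ → 𝕜} {C : ℝ} {z : 𝕜}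

theorem summable_mul_pow_of_norm_le (ha : ∀ n, ‖a n‖ ≤ C) (hz : ‖z‖ < 1) :
    Summable fun n => a n * z ^ n :=
  .of_norm_bounded ((summable_geometric_of_lt_one (norm_nonneg z) hz).mul_left C) fun n => by
    rw [norm_mul, norm_pow]
    exact mul_le_mul_of_nonneg_right (ha n) (by positivity)

theorem summable_nat_mul_pow_sub_one {r : ℝ} (hr₀ : 0 ≤ r) (hr : r < 1) :
    Summable fun n : ℕ => (n : ℝ) * r ^ (n - 1) := by
  refine (summable_nat_add_iff 1).1 ?_
  have hr' : ‖r‖ < 1 := by rwa [Real.norm_of_nonneg hr₀]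
  have h := (summable_pow_mul_geometric_of_norm_lt_one 1 hr').add
    (summable_geometric_of_lt_one hr₀ hr)
  refine h.congr fun n => ?_
  simp only [pow_one, Nat.cast_add, Nat.cast_one, add_tsub_cancel_right]
  ring

theorem hasDerivAt_tsum_mul_pow_add (k : ℕ) (ha : ∀ n, ‖a n‖ ≤ C) (hz : ‖z‖ < 1) :
    HasDerivAt (fun w => ∑' n, a n * w ^ (n + k))
      (∑' n, a n * ((n + k : ℕ) * z ^ (n + k - 1))) z := by
  obtain ⟨r, hzr, hr⟩ := exists_between hz
  have hr₀ : 0 ≤ r := (norm_nonneg z).trans hzr.le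
  have hu : Summable fun n => C * ((n + k : ℕ) * r ^ (n + k - 1)) :=
    ((summable_nat_add_iff k).2 (summable_nat_mul_pow_sub_one hr₀ hr)).mul_left C
  have hz₀ : Summable fun n => a n * z ^ (n + k) :=
    ((summable_mul_pow_of_norm_le ha hz).mul_left (z ^ k)).congr fun n => by ring
  refine hasDerivAt_tsum_of_isPreconnected hu Metric.isOpen_ball (convex_ball 0 r).isPreconnected
    (fun n w _ => (hasDerivAt_pow (n + k) w).const_mul (a n)) (fun n w hw => ?_)
    (mem_ball_zero_iff.2 hzr) hz₀ (mem_ball_zero_iff.2 hzr)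
  rw [mem_ball_zero_iff] at hw
  rw [norm_mul, norm_mul, norm_pow, RCLike.norm_natCast]
  have hC : 0 ≤ C := (norm_nonneg _).trans (ha 0)
  gcongr
  exact ha n

end PowerSeries

theorem eq_of_hasDerivAt_of_norm_lt_one {𝕜 E : Type*} [RCLike 𝕜] [NormedAddCommGroup E]
    [NormedSpace 𝕜 E] {f g f' : 𝕜 → E} (hf : ∀ w : 𝕜, ‖w‖ < 1 → HasDerivAt f (f' w) w)
    (hg : ∀ w : 𝕜, ‖w‖ < 1 → HasDerivAt g (f' w) w) (h₀ : f 0 = g 0) {z : 𝕜} (hz : ‖z‖ < 1) :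
    f z = g z := by
  have hf' := fun w (hw : w ∈ Metric.ball (0 : 𝕜) 1) => hf w (mem_ball_zero_iff.1 hw)
  have hg' := fun w (hw : w ∈ Metric.ball (0 : 𝕜) 1) => hg w (mem_ball_zero_iff.1 hw)
  exact Metric.isOpen_ball.eqOn_of_deriv_eq (convex_ball 0 1).isPreconnected
    (fun w hw => (hf' w hw).differentiableAt.differentiableWithinAt)
    (fun w hw => (hg' w hw).differentiableAt.differentiableWithinAt)
    (fun w hw => (hf' w hw).deriv.trans (hg' w hw).deriv.symm) (Metric.mem_ball_self one_pos) h₀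
    (mem_ball_zero_iff.2 hz)

theorem cpow_one_half_sq (u : ℂ) : (u ^ (1 / 2 : ℂ)) ^ 2 = u := by
  simp

theorem re_cpow_one_half_nonneg (u : ℂ) : 0 ≤ (u ^ (1 / 2 : ℂ)).re := by
  rw [one_div, cpow_inv_two_re]
  exact Real.sqrt_nonneg _

theorem re_one_sub_sq_nonneg {z : ℂ} (hz : ‖z‖ ≤ 1) : 0 ≤ (1 - z ^ 2).re := by
  have : ‖z ^ 2‖ ≤ 1 := by rw [norm_pow]; exact pow_le_one₀ (norm_nonneg z) hz
  have := (re_le_norm (z ^ 2)).trans this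
  simp only [sub_re, one_re]
  linarith

theorem one_sub_sq_mem_slitPlane {z : ℂ} (hz : ‖z‖ < 1) : 1 - z ^ 2 ∈ slitPlane := by
  have : ‖z ^ 2‖ < 1 := by rw [norm_pow]; exact pow_lt_one₀ (norm_nonneg z) hz two_ne_zero
  have := (re_le_norm (z ^ 2)).trans_lt this
  exact Or.inl (by simp only [sub_re, one_re]; linarith)

theorem I_mul_add_cpow_one_half_mem_slitPlane (z : ℂ) :
    I * z + (1 - z ^ 2) ^ (1 / 2 : ℂ) ∈ slitPlane := by
  set s := (1 - z ^ 2) ^ (1 / 2 : ℂ)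
  set w := I * z + s
  -- `w * (s - I z) = s² + z² = 1`, so `s` is the mean of `w` and `w⁻¹`, whose real part is
  -- negative if `w` is a nonpositive real; but `Re s ≥ 0`.
  have hw : w * (s - I * z) = 1 := by
    linear_combination cpow_one_half_sq (1 - z ^ 2) - z ^ 2 * I_sq
  have hw₀ : w ≠ 0 := left_ne_zero_of_mul_eq_one hw
  have hs : s = (w + w⁻¹) / 2 := by
    rw [← eq_inv_of_mul_eq_one_right hw]
    ring
  rw [mem_slitPlane_iff]
  by_contra! h
  obtain ⟨hre, him⟩ := h
  have hwre : w = (w.re : ℂ) := ext rfl (by simp [him])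
  have hneg : w.re < 0 := hre.lt_of_ne fun h => hw₀ (by rw [hwre, h, ofReal_zero])
  have : s.re < 0 := by
    rw [hs, hwre, ← ofReal_inv]
    simp only [div_ofNat_re, add_re, ofReal_re]
    linarith [inv_lt_zero.2 hneg]
  exact this.not_ge (re_cpow_one_half_nonneg _)

theorem carcsin_zero : carcsin 0 = 0 := by simp [carcsin]

theorem cpow_one_half_one_sub_sq_ne_zero {z : ℂ} (hz : ‖z‖ < 1) : (1 - z ^ 2) ^ (1 / 2 : ℂ) ≠ 0 :=
  fun h => slitPlane_ne_zero (one_sub_sq_mem_slitPlane hz) <| by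
    rw [← cpow_one_half_sq (1 - z ^ 2), h, zero_pow two_ne_zero]

theorem hasDerivAt_cpow_one_half_one_sub_sq {z : ℂ} (hz : ‖z‖ < 1) :
    HasDerivAt (fun z : ℂ => (1 - z ^ 2) ^ (1 / 2 : ℂ)) (-z / (1 - z ^ 2) ^ (1 / 2 : ℂ)) z := by
  convert ((hasDerivAt_pow 2 z).const_sub 1).cpow_const (c := 1 / 2) (one_sub_sq_mem_slitPlane hz)
    using 1
  rw [show (1 / 2 - 1 : ℂ) = -(1 / 2) by norm_num, cpow_neg]
  push_cast
  ring

theorem hasDerivAt_carcsin {z : ℂ} (hz : ‖z‖ < 1) :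
    HasDerivAt carcsin ((1 - z ^ 2) ^ (1 / 2 : ℂ))⁻¹ z := by
  have hs := cpow_one_half_one_sub_sq_ne_zero hz
  have hw := I_mul_add_cpow_one_half_mem_slitPlane z
  have hw₀ := slitPlane_ne_zero hw
  have hlin : HasDerivAt (fun y : ℂ => I * y + (1 - y ^ 2) ^ (1 / 2 : ℂ))
      (I * 1 + -z / (1 - z ^ 2) ^ (1 / 2 : ℂ)) z :=
    ((hasDerivAt_id' z).const_mul I).fun_add (hasDerivAt_cpow_one_half_one_sub_sq hz)
  refine ((hlin.clog hw).const_mul (-I)).congr_deriv ?_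
  field_simp
  linear_combination -(1 - z ^ 2) ^ (1 / 2 : ℂ) * I_sq

theorem continuousAt_carcsin {z : ℂ} (hz : ‖z‖ ≤ 1) : ContinuousAt carcsin z := by
  have hs : ContinuousAt (fun z : ℂ => (1 - z ^ 2) ^ (1 / 2 : ℂ)) z :=
    (continuousAt_cpow_const_of_re_pos (w := 1 / 2) (Or.inl (re_one_sub_sq_nonneg hz))
      (by norm_num)).comp (f := fun z : ℂ => 1 - z ^ 2) (by fun_prop)
  exact continuousAt_const.mul ((continuousAt_const.mul continuousAt_id).add hs |>.clog
    (I_mul_add_cpow_one_half_mem_slitPlane z))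

noncomputable def sinPowGenFun (z : ℂ) : ℂ := ∑' n, (sinPowIntegral n : ℂ) * z ^ n

noncomputable def sinPowPrimitive (z : ℂ) : ℂ :=
  ∑' n : ℕ, (sinPowIntegral n : ℂ) / (n + 1) * z ^ (n + 1)

theorem norm_sinPowIntegral_le (n : ℕ) : ‖(sinPowIntegral n : ℂ)‖ ≤ π := by
  rw [norm_real, Real.norm_of_nonneg (sinPowIntegral_pos n).le]
  exact sinPowIntegral_le_pi n

theorem norm_sinPowIntegral_div_le (n : ℕ) : ‖(sinPowIntegral n : ℂ) / (n + 1)‖ ≤ π := by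
  have hn : ‖(n + 1 : ℂ)‖ = n + 1 := by exact_mod_cast Complex.norm_natCast (n + 1)
  rw [norm_div, hn]
  refine (div_le_self (norm_nonneg _) ?_).trans (norm_sinPowIntegral_le n)
  linarith [n.cast_nonneg (α := ℝ)]

theorem hasDerivAt_sinPowPrimitive {z : ℂ} (hz : ‖z‖ < 1) :
    HasDerivAt sinPowPrimitive (sinPowGenFun z) z := by
  refine (hasDerivAt_tsum_mul_pow_add 1 norm_sinPowIntegral_div_le hz).congr_deriv
    (tsum_congr fun n => ?_)
  have : (n + 1 : ℂ) ≠ 0 := by exact_mod_cast n.succ_ne_zero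
  push_cast
  field_simp

theorem hasDerivAt_sinPowGenFun {z : ℂ} (hz : ‖z‖ < 1) :
    HasDerivAt sinPowGenFun (∑' n, (sinPowIntegral n : ℂ) * (n * z ^ (n - 1))) z := by
  have h := hasDerivAt_tsum_mul_pow_add 0 norm_sinPowIntegral_le hz
  simp only [add_zero] at h
  exact h

theorem sinPowGenFun_ode {z : ℂ} (hz : ‖z‖ < 1) :
    (1 - z ^ 2) * (∑' n, (sinPowIntegral n : ℂ) * (n * z ^ (n - 1))) - z * sinPowGenFun z = 2 := by
  set c : ℕ → ℂ := fun n => (sinPowIntegral n : ℂ)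
  set Q := ∑' n, c n * (n * z ^ (n - 1))
  have hQ : HasSum (fun n => c n * (n * z ^ (n - 1))) Q := by
    refine Summable.hasSum (.of_norm_bounded
      ((summable_nat_mul_pow_sub_one (norm_nonneg z) hz).mul_left π) fun n => ?_)
    rw [norm_mul, norm_mul, norm_pow, Complex.norm_natCast]
    gcongr
    exact norm_sinPowIntegral_le n
  have hP : HasSum (fun n => c n * z ^ n) (sinPowGenFun z) :=
    (summable_mul_pow_of_norm_le norm_sinPowIntegral_le hz).hasSum
  -- the recursion `(n + 2) c (n + 2) = (n + 1) c n` turns `Q` into a shift of itself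
  have hshift : HasSum (fun n => (n + 1) * c n * z ^ (n + 1)) (Q - 2) := by
    have h := (hasSum_nat_add_iff' 2).2 hQ
    rw [show ∑ i ∈ Finset.range 2, c i * (i * z ^ (i - 1)) = 2 by
      simp [Finset.sum_range_succ, c, sinPowIntegral_one]] at h
    refine h.congr_fun fun n => ?_
    have : (n + 2 : ℂ) ≠ 0 := by exact_mod_cast (n + 1).succ_ne_zero
    simp only [c, sinPowIntegral_add_two]
    push_cast
    field_simp
  have hz2 : HasSum (fun n => n * c n * z ^ (n + 1)) (z ^ 2 * Q) := by
    refine (hQ.mul_left (z ^ 2)).congr_fun fun n => ?_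
    rcases n with _ | n
    · simp
    · rw [Nat.add_sub_cancel]
      push_cast
      ring
  have hz1 : HasSum (fun n => c n * z ^ (n + 1)) (z * sinPowGenFun z) :=
    (hP.mul_left z).congr_fun fun n => by ring
  have := hshift.unique ((hz2.add hz1).congr_fun fun n => by ring)
  linear_combination this

theorem sinPowGenFun_zero : sinPowGenFun 0 = π := by
  rw [sinPowGenFun, tsum_eq_single 0 fun n hn => by simp [zero_pow hn]]
  simp [sinPowIntegral_zero]

theorem sinPowGenFun_mul_cpow_one_half {z : ℂ} (hz : ‖z‖ < 1) :
    sinPowGenFun z * (1 - z ^ 2) ^ (1 / 2 : ℂ) = π + 2 * carcsin z := by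
  refine eq_of_hasDerivAt_of_norm_lt_one (f := fun w => sinPowGenFun w * (1 - w ^ 2) ^ (1 / 2 : ℂ))
    (g := fun w => π + 2 * carcsin w) (f' := fun w => 2 * ((1 - w ^ 2) ^ (1 / 2 : ℂ))⁻¹)
    (fun w hw => ?_) (fun w hw => (hasDerivAt_carcsin hw).const_mul 2 |>.const_add _)
    (by simp [sinPowGenFun_zero, carcsin_zero]) hz
  have hs := cpow_one_half_one_sub_sq_ne_zero hw
  refine ((hasDerivAt_sinPowGenFun hw).mul (hasDerivAt_cpow_one_half_one_sub_sq hw)).congr_deriv ?_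
  set Q := ∑' n, (sinPowIntegral n : ℂ) * (n * w ^ (n - 1))
  field_simp
  linear_combination sinPowGenFun_ode hw + Q * cpow_one_half_sq (1 - w ^ 2)

theorem sinPowPrimitive_eq_of_norm_lt_one {z : ℂ} (hz : ‖z‖ < 1) :
    sinPowPrimitive z = π * carcsin z + carcsin z ^ 2 := by
  refine eq_of_hasDerivAt_of_norm_lt_one (g := fun w => π * carcsin w + carcsin w ^ 2)
    (fun w hw => hasDerivAt_sinPowPrimitive hw)
    (fun w hw => ?_) (by simp [sinPowPrimitive, carcsin_zero]) hz
  have hs := cpow_one_half_one_sub_sq_ne_zero hw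
  refine (((hasDerivAt_carcsin hw).const_mul _).add ((hasDerivAt_carcsin hw).pow 2)).congr_deriv ?_
  rw [eq_div_of_mul_eq hs (sinPowGenFun_mul_cpow_one_half hw)]
  push_cast
  ring

theorem norm_sinPowIntegral_div_mul_pow_le {z : ℂ} (hz : ‖z‖ ≤ 1) (n : ℕ) :
    ‖(sinPowIntegral n : ℂ) / (n + 1) * z ^ (n + 1)‖ ≤ sinPowIntegral n / (n + 1) := by
  have hn : ‖(n + 1 : ℂ)‖ = n + 1 := by exact_mod_cast Complex.norm_natCast (n + 1)
  rw [norm_mul, norm_div, hn, norm_real, Real.norm_of_nonneg (sinPowIntegral_pos n).le, norm_pow]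
  exact mul_le_of_le_one_right (div_pos (sinPowIntegral_pos n) (by positivity)).le
    (pow_le_one₀ (norm_nonneg z) hz)

theorem continuousOn_sinPowPrimitive : ContinuousOn sinPowPrimitive (Metric.closedBall 0 1) :=
  continuousOn_tsum (fun n => by fun_prop) summable_sinPowIntegral_div
    fun n z hz => norm_sinPowIntegral_div_mul_pow_le (mem_closedBall_zero_iff.1 hz) n

theorem sinPowPrimitive_eq {z : ℂ} (hz : ‖z‖ ≤ 1) :
    sinPowPrimitive z = π * carcsin z + carcsin z ^ 2 := by
  refine Set.EqOn.of_subset_closure (fun w hw => sinPowPrimitive_eq_of_norm_lt_one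
    (mem_ball_zero_iff.1 hw)) continuousOn_sinPowPrimitive (fun w hw => ?_)
    Metric.ball_subset_closedBall (closure_ball 0 one_ne_zero).ge (mem_closedBall_zero_iff.2 hz)
  have hA := continuousAt_carcsin (mem_closedBall_zero_iff.1 hw)
  exact ((continuousAt_const.mul hA).add (hA.pow 2)).continuousWithinAt

theorem S_series (v : ℂ) (hv : ‖v‖ ≤ 1) :
    Summable (fun m : ℕ =>
      ‖v ^ (m + 1) * (Beta (((m : ℝ) + 1) / 2) (1 / 2) : ℂ) /
        (2 * (π : ℂ) ^ 2 * ((m : ℂ) + 1))‖) ∧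
    (∑' m : ℕ, v ^ (m + 1) * (Beta (((m : ℝ) + 1) / 2) (1 / 2) : ℂ) /
        (2 * (π : ℂ) ^ 2 * ((m : ℂ) + 1))) =
      (1 / (2 * (π : ℂ))) * carcsin v + (1 / (2 * (π : ℂ) ^ 2)) * carcsin v ^ 2 := by
  have hπ : (π : ℂ) ≠ 0 := ofReal_ne_zero.2 pi_ne_zero
  have hterm : ∀ m : ℕ, v ^ (m + 1) * (Beta (((m : ℝ) + 1) / 2) (1 / 2) : ℂ) /
      (2 * (π : ℂ) ^ 2 * ((m : ℂ) + 1)) =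
      (sinPowIntegral m : ℂ) / (m + 1) * v ^ (m + 1) / (2 * (π : ℂ) ^ 2) := fun m => by
    have : (m + 1 : ℂ) ≠ 0 := by exact_mod_cast m.succ_ne_zero
    rw [Beta_eq_sinPowIntegral]
    field_simp
  simp_rw [hterm]
  refine ⟨?_, ?_⟩
  · simp_rw [norm_div]
    exact (summable_sinPowIntegral_div.of_nonneg_of_le (fun _ => norm_nonneg _)
      (norm_sinPowIntegral_div_mul_pow_le hv)).div_const _
  · rw [tsum_div_const, ← sinPowPrimitive, sinPowPrimitive_eq hv]
    field_simp
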